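/- arXiv:1612.01694 — 4 statements merged into one kernel-verified Lean document; each statement's English description precedes it below -/
import Mathlib

section
/- Let α > 0 and let G = (U,V,E) be a bipartite graph satisfying the α-neighbourhood condition which contains no α-redundant edge. Then for every edge uv ∈ E (u ∈ U, v ∈ V), g(uv, α) ≤ 1, with equality if and only if d(v) = 1. -/
open scoped Classical

noncomputable section

variable {U V : Type*}

/-- The neighbourhood `Γ(S) ⊆ V` of a set `S` of left vertices of the bipartite
graph with edge set `E ⊆ U × V`. -/
def nbhd (E : Finset (U × V)) (S : Finset U) : Finset V :=
  (E.filter fun p => p.1 ∈ S).image Prod.snd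

/-- The neighbourhood `Γ(T) ⊆ U` of a set `T` of right vertices. -/
def nbhdR (E : Finset (U × V)) (T : Finset V) : Finset U :=
  (E.filter fun p => p.2 ∈ T).image Prod.fst

/-- The degree of a left vertex `u` in the bipartite graph with edge set `E`. -/
def degL (E : Finset (U × V)) (u : U) : ℕ := (E.filter fun p => p.1 = u).card

/-- The degree of a right vertex `v` in the bipartite graph with edge set `E`. -/
def degR (E : Finset (U × V)) (v : V) : ℕ := (E.filter fun p => p.2 = v).card

/-- The bipartite graph on the vertex set `U ⊕ V` determined by an edge set
`F ⊆ U × V`. -/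
def mkGraph (F : Finset (U × V)) : SimpleGraph (U ⊕ V) :=
  SimpleGraph.fromRel fun x y => ∃ p ∈ F, x = Sum.inl p.1 ∧ y = Sum.inr p.2

/-- The edges of `F` lying inside the connected component `c` of `mkGraph F`. -/
def componentEdges (F : Finset (U × V)) (c : (mkGraph F).ConnectedComponent) :
    Finset (U × V) :=
  F.filter fun p => (mkGraph F).connectedComponentMk (Sum.inl p.1) = c

/-- An `(s,t)`-matching in the bipartite graph `G = (U,V,E)`: a subset `F ⊆ E` such
that in `H = (U,V,F)` every connected component is a tree (i.e. `H` is acyclic) with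
at most `t` edges, and every vertex `u ∈ U` has degree exactly `s` in `H`. -/
def IsSTMatching (s t : ℕ) (E F : Finset (U × V)) : Prop :=
  F ⊆ E ∧ (mkGraph F).IsAcyclic ∧
    (∀ c : (mkGraph F).ConnectedComponent, (componentEdges F c).card ≤ t) ∧
    ∀ u : U, degL F u = s

/-- `h(A, α) = |Γ(A)| − α·|A|`. -/
def hval (E : Finset (U × V)) (α : ℝ) (A : Finset U) : ℝ :=
  ((nbhd E A).card : ℝ) - α * A.card

/-- The `α`-neighbourhood condition: `|Γ(S)| ≥ α·|S|` for every `S ⊆ U`. -/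
def NbhdCond (E : Finset (U × V)) (α : ℝ) : Prop :=
  ∀ S : Finset U, α * S.card ≤ ((nbhd E S).card : ℝ)

/-- An edge `e` is `α`-redundant if `G − e` still satisfies the
`α`-neighbourhood condition. -/
def Redundant (E : Finset (U × V)) (α : ℝ) (e : U × V) : Prop :=
  NbhdCond (E.erase e) α

/-- `f(uv, α)`: the minimum of `h(A, α)` over `A ∈ F_{uv} = {A ⊆ U : u ∈ A, v ∉ Γ(A \ {u})}`. -/
def fval (E : Finset (U × V)) (α : ℝ) (u : U) (v : V) : ℝ :=
  sInf {x : ℝ | ∃ A : Finset U, u ∈ A ∧ v ∉ nbhd E (A.erase u) ∧ x = hval E α A}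

/-- `g(uv, α)`: the minimum of `h(A, α)` over `A ∈ G_{uv} = {A ⊆ U \ {u} : v ∈ Γ(A)}`,
set to `1` when `d(v) = 1` (in which case `G_{uv} = ∅`). -/
def gval (E : Finset (U × V)) (α : ℝ) (u : U) (v : V) : ℝ :=
  if degR E v = 1 then 1
  else sInf {x : ℝ | ∃ A : Finset U, u ∉ A ∧ v ∈ nbhd E A ∧ x = hval E α A}

/-- **Proposition 5(iii).** In a bipartite graph satisfying the `α`-neighbourhood
condition with no `α`-redundant edge, every edge `uv` satisfies `g(uv, α) ≤ 1`,
with equality iff `d(v) = 1`. -/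
theorem stmt_6 {U V : Type*} [Fintype U] [Fintype V] (α : ℝ) (hα : 0 < α)
    (E : Finset (U × V)) (hN : NbhdCond E α)
    (hnr : ∀ e ∈ E, ¬ Redundant E α e) (u : U) (v : V) (huv : (u, v) ∈ E) :
    gval E α u v ≤ 1 ∧ (gval E α u v = 1 ↔ degR E v = 1) := by
  by_cases hd : degR E v = 1
  · simp [gval, hd]
  · -- degR E v ≥ 2: find another edge (u', v) with u' ≠ u
    have h1 : (u, v) ∈ E.filter fun p => p.2 = v := by
      simp [huv]
    have hcard : 1 ≤ degR E v := Finset.card_pos.2 ⟨_, h1⟩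
    have hcard2 : 2 ≤ degR E v := by
      have := lt_of_le_of_ne hcard (Ne.symm hd)
      omega
    obtain ⟨p, hp, hpne⟩ : ∃ p ∈ E.filter fun q => q.2 = v, p ≠ (u, v) := by
      by_contra hcon
      push_neg at hcon
      have : (E.filter fun q => q.2 = v) ⊆ {(u, v)} := by
        intro q hq; simp [hcon q hq]
      have hle1 := Finset.card_le_card this
      simp at hle1
      have h2 : 2 ≤ (E.filter fun q => q.2 = v).card := hcard2
      omega
    simp only [Finset.mem_filter] at hp
    obtain ⟨hpE, hpv⟩ := hp
    set e : U × V := (p.1, v) with he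
    have heE : e ∈ E := by rw [he, ← hpv]; exact hpE
    have hune : p.1 ≠ u := by
      intro h; apply hpne; rw [← hpv, ← h]
    -- not redundant
    have := hnr e heE
    unfold Redundant NbhdCond at this
    push_neg at this
    obtain ⟨S, hS⟩ := this
    -- nbhd E S ⊆ insert v (nbhd (E.erase e) S)
    have hsub : nbhd E S ⊆ insert v (nbhd (E.erase e) S) := by
      intro w hw
      simp only [nbhd, Finset.mem_image, Finset.mem_filter] at hw
      obtain ⟨q, ⟨hqE, hqS⟩, hqw⟩ := hw
      by_cases hq : q = e
      · subst hq; simp [← hqw, he]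
      · apply Finset.mem_insert_of_mem
        simp only [nbhd, Finset.mem_image, Finset.mem_filter]
        exact ⟨q, ⟨Finset.mem_erase.2 ⟨hq, hqE⟩, hqS⟩, hqw⟩
    have hsub' : nbhd (E.erase e) S ⊆ nbhd E S := by
      intro w hw
      simp only [nbhd, Finset.mem_image, Finset.mem_filter] at hw ⊢
      obtain ⟨q, ⟨hqE, hqS⟩, hqw⟩ := hw
      exact ⟨q, ⟨Finset.mem_of_mem_erase hqE, hqS⟩, hqw⟩
    have hNS := hN S
    have hvnot : v ∉ nbhd (E.erase e) S := by
      intro hv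
      have : nbhd E S ⊆ nbhd (E.erase e) S := by
        intro w hw
        rcases Finset.mem_insert.1 (hsub hw) with h | h
        · rwa [h]
        · exact h
      have := Finset.card_le_card this
      have : ((nbhd E S).card : ℝ) ≤ ((nbhd (E.erase e) S).card : ℝ) := by
        exact_mod_cast this
      linarith
    have hvS : v ∈ nbhd E S := by
      by_contra hv
      have : nbhd E S ⊆ nbhd (E.erase e) S := by
        intro w hw
        rcases Finset.mem_insert.1 (hsub hw) with h | h
        · exact absurd (h ▸ hw) hv
        · exact h
      have := Finset.card_le_card this
      have : ((nbhd E S).card : ℝ) ≤ ((nbhd (E.erase e) S).card : ℝ) := by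
        exact_mod_cast this
      linarith
    have huS : u ∉ S := by
      intro hu
      apply hvnot
      simp only [nbhd, Finset.mem_image, Finset.mem_filter]
      refine ⟨(u, v), ⟨Finset.mem_erase.2 ⟨?_, huv⟩, hu⟩, rfl⟩
      rw [he]; intro h
      exact hune (congrArg Prod.fst h).symm
    -- card bound
    have hcardle : (nbhd E S).card ≤ (nbhd (E.erase e) S).card + 1 := by
      calc (nbhd E S).card ≤ (insert v (nbhd (E.erase e) S)).card :=
            Finset.card_le_card hsub
        _ ≤ (nbhd (E.erase e) S).card + 1 := Finset.card_insert_le _ _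
    have hhS : hval E α S < 1 := by
      unfold hval
      have : ((nbhd E S).card : ℝ) ≤ ((nbhd (E.erase e) S).card : ℝ) + 1 := by
        exact_mod_cast hcardle
      linarith
    -- sInf bound
    have hmem : hval E α S ∈
        {x : ℝ | ∃ A : Finset U, u ∉ A ∧ v ∈ nbhd E A ∧ x = hval E α A} :=
      ⟨S, huS, hvS, rfl⟩
    have hbdd : BddBelow
        {x : ℝ | ∃ A : Finset U, u ∉ A ∧ v ∈ nbhd E A ∧ x = hval E α A} := by
      refine ⟨0, fun x hx => ?_⟩
      obtain ⟨A, _, _, hxA⟩ := hx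
      have := hN A
      rw [hxA]; unfold hval; linarith
    have hle := csInf_le hbdd hmem
    have hglt : gval E α u v < 1 := by
      rw [gval, if_neg hd]
      linarith
    exact ⟨le_of_lt hglt, by constructor <;> intro h <;> [exact absurd h (ne_of_lt hglt); exact absurd h hd]⟩
end
end

section
/- Let k ≥ 1 be a positive integer and let G = (U,V,E) be a bipartite graph. Then G has a k-star covering if and only if |Γ(S)| ≥ (1/k)·|S| for every S ⊆ U and every S ⊆ V. -/
/-!
Necessity: in a star cover every vertex lies in a component with at most `k` edges, so sending
each vertex of `S` to its partner along a cover edge is at most `k`-to-one into `Γ(S)`.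

Sufficiency: Hall's theorem applied to `k` copies of every vertex gives maps `f : U → V` and
`g : V → U` along edges whose fibres have at most `k` elements. Together they form a map `h` on
`U ⊕ V` that swaps the two sides. If `L = (h '' L)ᶜ`, the edges `{x, h x}` for `x ∈ L` cover
every vertex and form stars centred at the points of `h '' L`, each with at most `k` edges.
Such an `L` exists because `h` alternates sides: `Φ L = (h '' L)ᶜ` is antitone, so with `A`
the least fixed point of `Φ ∘ Φ` and `B = Φ A ⊇ A`, the set `L = A ∪ (B ∩ U)` is a fixed point
of `Φ`.
-/

open scoped Classical

noncomputable section

variable {U V : Type*}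

/-- A `k`-star covering of the bipartite graph `G = (U,V,E)`: a subset `F ⊆ E` such
that in `H = (U,V,F)` every vertex of `U ∪ V` has degree at least `1` and every
connected component is a star with at most `k` edges (all edges of the component
share a common vertex). -/
def IsStarCover (k : ℕ) (E F : Finset (U × V)) : Prop :=
  F ⊆ E ∧
    (∀ x : U ⊕ V, ∃ p ∈ F, x = Sum.inl p.1 ∨ x = Sum.inr p.2) ∧
    ∀ c : (mkGraph F).ConnectedComponent,
      (componentEdges F c).card ≤ k ∧
      ∃ x : U ⊕ V, ∀ p ∈ componentEdges F c, Sum.inl p.1 = x ∨ Sum.inr p.2 = x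

open Finset

theorem exists_eq_compl_image_of_alternating {X : Type*} (h : X → X) (T : Set X)
    (hT : ∀ x, h x ∈ T ↔ x ∉ T) : ∃ L : Set X, L = (h '' L)ᶜ := by
  let Φ₂ : Set X →o Set X :=
    ⟨fun L => (h '' (h '' L)ᶜ)ᶜ, fun _ _ hL =>
      Set.compl_subset_compl.2 (Set.image_mono (Set.compl_subset_compl.2 (Set.image_mono hL)))⟩
  set A := Φ₂.lfp
  set B := (h '' A)ᶜ
  have hA : (h '' B)ᶜ = A := Φ₂.map_lfp
  have hAB : A ⊆ B := Φ₂.lfp_le (show (h '' (h '' B)ᶜ)ᶜ ⊆ B by rw [hA])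
  refine ⟨A ∪ (B ∩ T), Set.ext fun x => ⟨?_, fun hx => by_contra fun hxL => hx ?_⟩⟩
  · rintro (hxA | ⟨hxB, hxT⟩) ⟨y, hyL, rfl⟩
    · exact (hA ▸ hxA) ⟨y, hyL.elim (hAB ·) (·.1), rfl⟩
    · rcases hyL with hyA | ⟨-, hyT⟩
      · exact hxB ⟨y, hyA, rfl⟩
      · exact (hT y).1 hxT hyT
  · by_cases hxB : x ∈ B
    · have hxhB : x ∈ h '' B := by_contra fun hxhB => hxL (Or.inl (hA ▸ hxhB))
      obtain ⟨y, hyB, rfl⟩ := hxhB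
      have hyT : y ∈ T := by_contra fun hyT => hxL (Or.inr ⟨hxB, (hT y).2 hyT⟩)
      exact ⟨y, Or.inr ⟨hyB, hyT⟩, rfl⟩
    · obtain ⟨y, hyA, rfl⟩ := not_not.1 hxB
      exact ⟨y, Or.inl hyA, rfl⟩

theorem Finset.exists_card_fiber_le_of_hall {α β : Type*} [Fintype α] [DecidableEq β]
    (r : α → Finset β) (k : ℕ) (hr : ∀ S : Finset α, #S ≤ k * #(S.biUnion r)) :
    ∃ f : α → β, (∀ a, f a ∈ r a) ∧ ∀ b, #{a | f a = b} ≤ k := by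
  have hHall :
      ∀ S : Finset α, #S ≤ #(S.biUnion fun a => r a ×ˢ (univ : Finset (Fin k))) := by
    intro S
    have hprod : (S.biUnion fun a => r a ×ˢ (univ : Finset (Fin k))) = S.biUnion r ×ˢ univ := by
      ext; simp
    simpa [hprod, mul_comm] using hr S
  obtain ⟨f, hf_inj, hf_mem⟩ := (all_card_le_biUnion_card_iff_exists_injective _).1 hHall
  refine ⟨fun a => (f a).1, fun a => (mem_product.1 (hf_mem a)).1, fun b => ?_⟩
  calc #{a | (f a).1 = b} ≤ #(univ : Finset (Fin k)) :=
        card_le_card_of_injOn (fun a => (f a).2) (fun _ _ => mem_univ _) fun a ha a' ha' h =>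
          hf_inj (Prod.ext ((mem_filter.1 ha).2.trans (mem_filter.1 ha').2.symm) h)
    _ = k := by simp

theorem nbhd_eq_biUnion (E : Finset (U × V)) (S : Finset U) :
    nbhd E S = S.biUnion fun u => nbhd E {u} := by
  ext v; simp [nbhd, and_comm]

theorem nbhdR_eq_biUnion (E : Finset (U × V)) (T : Finset V) :
    nbhdR E T = T.biUnion fun v => nbhdR E {v} := by
  ext u; simp [nbhdR, and_comm]

theorem mem_nbhd_singleton {E : Finset (U × V)} {u : U} {v : V} :
    v ∈ nbhd E {u} ↔ (u, v) ∈ E := by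
  simp [nbhd]

theorem mem_nbhdR_singleton {E : Finset (U × V)} {u : U} {v : V} :
    u ∈ nbhdR E {v} ↔ (u, v) ∈ E := by
  simp [nbhdR]

section Necessity

variable {k : ℕ} {E F : Finset (U × V)}

theorem mkGraph_adj_of_mem {p : U × V} (hp : p ∈ F) :
    (mkGraph F).Adj (Sum.inl p.1) (Sum.inr p.2) := by
  simp only [mkGraph, SimpleGraph.fromRel_adj, ne_eq, reduceCtorEq, not_false_eq_true, true_and]
  exact Or.inl ⟨p, hp, rfl, rfl⟩

theorem IsStarCover.degL_le (hF : IsStarCover k E F) (u : U) : degL F u ≤ k :=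
  le_trans (card_le_card fun p hp => by
      obtain ⟨hpF, rfl⟩ := mem_filter.1 hp
      exact mem_filter.2 ⟨hpF, rfl⟩)
    (hF.2.2 ((mkGraph F).connectedComponentMk (Sum.inl u))).1

theorem IsStarCover.degR_le (hF : IsStarCover k E F) (v : V) : degR F v ≤ k :=
  le_trans (card_le_card fun p hp => by
      obtain ⟨hpF, rfl⟩ := mem_filter.1 hp
      exact mem_filter.2
        ⟨hpF, SimpleGraph.ConnectedComponent.eq.2 (mkGraph_adj_of_mem hpF).reachable⟩)
    (hF.2.2 ((mkGraph F).connectedComponentMk (Sum.inr v))).1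

theorem IsStarCover.card_le_mul_card_nbhd (hF : IsStarCover k E F) (S : Finset U) :
    #S ≤ k * #(nbhd E S) := by
  have hcov : ∀ u : U, ∃ v, (u, v) ∈ F := fun u => by
    obtain ⟨p, hp, hup | hup⟩ := hF.2.1 (Sum.inl u)
    · exact ⟨p.2, Sum.inl_injective hup ▸ hp⟩
    · exact absurd hup Sum.inl_ne_inr
  choose q hq using hcov
  have hq_mem : ∀ u ∈ S, q u ∈ nbhd E S := fun u hu =>
    mem_image.2 ⟨(u, q u), mem_filter.2 ⟨hF.1 (hq u), hu⟩, rfl⟩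
  refine card_le_mul_card_image_of_maps_to hq_mem k fun v _ => (hF.degR_le v).trans' ?_
  refine card_le_card_of_injOn (fun u => (u, v)) (fun u hu => ?_) fun _ _ _ _ => congrArg Prod.fst
  obtain ⟨-, rfl⟩ := mem_filter.1 hu
  exact mem_filter.2 ⟨hq u, rfl⟩

theorem IsStarCover.card_le_mul_card_nbhdR (hF : IsStarCover k E F) (T : Finset V) :
    #T ≤ k * #(nbhdR E T) := by
  have hcov : ∀ v : V, ∃ u, (u, v) ∈ F := fun v => by
    obtain ⟨p, hp, hvp | hvp⟩ := hF.2.1 (Sum.inr v)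
    · exact absurd hvp.symm Sum.inl_ne_inr
    · exact ⟨p.1, Sum.inr_injective hvp ▸ hp⟩
  choose q hq using hcov
  have hq_mem : ∀ v ∈ T, q v ∈ nbhdR E T := fun v hv =>
    mem_image.2 ⟨(q v, v), mem_filter.2 ⟨hF.1 (hq v), hv⟩, rfl⟩
  refine card_le_mul_card_image_of_maps_to hq_mem k fun u _ => (hF.degL_le u).trans' ?_
  refine card_le_card_of_injOn (fun v => (u, v)) (fun v hv => ?_) fun _ _ _ _ => congrArg Prod.snd
  obtain ⟨-, rfl⟩ := mem_filter.1 hv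
  exact mem_filter.2 ⟨hq v, rfl⟩

end Necessity

section Sufficiency

variable {k : ℕ} {E F : Finset (U × V)}

theorem isStarCover_of_centre (ctr : U ⊕ V → U ⊕ V) (hFE : F ⊆ E)
    (hcov : ∀ x : U ⊕ V, ∃ p ∈ F, x = Sum.inl p.1 ∨ x = Sum.inr p.2)
    (hctr : ∀ p ∈ F, ctr (Sum.inl p.1) = ctr (Sum.inr p.2) ∧
      (ctr (Sum.inl p.1) = Sum.inl p.1 ∨ ctr (Sum.inl p.1) = Sum.inr p.2))
    (hcard : ∀ z, #{p ∈ F | ctr (Sum.inl p.1) = z} ≤ k) :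
    IsStarCover k E F := by
  have hreach : ∀ x y, (mkGraph F).Reachable x y → ctr x = ctr y := by
    rintro x y ⟨w⟩
    induction w with
    | nil => rfl
    | cons hadj _ ih =>
      refine Eq.trans ?_ ih
      simp only [mkGraph, SimpleGraph.fromRel_adj] at hadj
      obtain ⟨-, ⟨p, hp, rfl, rfl⟩ | ⟨p, hp, rfl, rfl⟩⟩ := hadj
      exacts [(hctr p hp).1, (hctr p hp).1.symm]
  refine ⟨hFE, hcov, fun c => ?_⟩
  obtain ⟨w, rfl⟩ := c.exists_rep
  have hctr_w : ∀ p ∈ componentEdges F ((mkGraph F).connectedComponentMk w),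
      ctr (Sum.inl p.1) = ctr w := fun p hp =>
    hreach _ _ (SimpleGraph.ConnectedComponent.eq.1 (mem_filter.1 hp).2)
  refine ⟨le_trans (card_le_card fun p hp => ?_) (hcard (ctr w)), ctr w, fun p hp => ?_⟩
  · exact mem_filter.2 ⟨(mem_filter.1 hp).1, hctr_w p hp⟩
  · rw [← hctr_w p hp]
    exact ((hctr p (mem_filter.1 hp).1).2).imp Eq.symm Eq.symm

end Sufficiency

section Choice

variable {k : ℕ} {E : Finset (U × V)} (f : U → V) (g : V → U)

def choiceMap : U ⊕ V → U ⊕ V := Sum.elim (Sum.inr ∘ f) (Sum.inl ∘ g)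

def choiceEdge : U ⊕ V → U × V := Sum.elim (fun u => (u, f u)) (fun v => (g v, v))

@[simp] theorem choiceMap_inl (u : U) : choiceMap f g (.inl u) = .inr (f u) := rfl

@[simp] theorem choiceMap_inr (v : V) : choiceMap f g (.inr v) = .inl (g v) := rfl

@[simp] theorem choiceEdge_inl (u : U) : choiceEdge f g (.inl u) = (u, f u) := rfl

@[simp] theorem choiceEdge_inr (v : V) : choiceEdge f g (.inr v) = (g v, v) := rfl

theorem choiceEdge_ends (x : U ⊕ V) :
    (Sum.inl (choiceEdge f g x).1 = x ∧ Sum.inr (choiceEdge f g x).2 = choiceMap f g x) ∨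
      (Sum.inl (choiceEdge f g x).1 = choiceMap f g x ∧ Sum.inr (choiceEdge f g x).2 = x) := by
  cases x <;> simp

theorem choiceMap_mem_range_inl_iff (x : U ⊕ V) :
    choiceMap f g x ∈ Set.range Sum.inl ↔ x ∉ Set.range Sum.inl := by
  cases x <;> simp

theorem card_choiceMap_fiber_le [Fintype U] [Fintype V] (hf : ∀ v, #{u | f u = v} ≤ k)
    (hg : ∀ u, #{v | g v = u} ≤ k) (z : U ⊕ V) : #{x | choiceMap f g x = z} ≤ k := by
  cases z with
  | inl u =>
    calc #{x | choiceMap f g x = Sum.inl u} = #(({v | g v = u} : Finset V).map .inr) := by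
          refine congrArg card (Finset.ext fun x => ?_); cases x <;> simp
      _ ≤ k := (card_map _).trans_le (hg u)
  | inr v =>
    calc #{x | choiceMap f g x = Sum.inr v} = #(({u | f u = v} : Finset U).map .inl) := by
          refine congrArg card (Finset.ext fun x => ?_); cases x <;> simp
      _ ≤ k := (card_map _).trans_le (hf v)

theorem exists_isStarCover_of_choice [Fintype U] [Fintype V] (hfE : ∀ u, (u, f u) ∈ E)
    (hgE : ∀ v, (g v, v) ∈ E) (hf : ∀ v, #{u | f u = v} ≤ k) (hg : ∀ u, #{v | g v = u} ≤ k) :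
    ∃ F, IsStarCover k E F := by
  obtain ⟨L, hL⟩ := exists_eq_compl_image_of_alternating (choiceMap f g) (Set.range Sum.inl)
    (choiceMap_mem_range_inl_iff f g)
  set h := choiceMap f g
  set e := choiceEdge f g
  have hLc (x : U ⊕ V) : x ∈ L ↔ x ∉ h '' L := Set.ext_iff.1 hL x
  set ctr : U ⊕ V → U ⊕ V := fun x => if x ∈ L then h x else x
  have hctr_ends : ∀ y ∈ L, ctr (Sum.inl (e y).1) = h y ∧ ctr (Sum.inr (e y).2) = h y := by
    intro y hy
    have hctr_y : ctr y = h y := if_pos hy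
    have hctr_hy : ctr (h y) = h y := if_neg fun hhy => (hLc _).1 hhy ⟨y, hy, rfl⟩
    rcases choiceEdge_ends f g y with ⟨h₁, h₂⟩ | ⟨h₁, h₂⟩ <;> rw [h₁, h₂]
    exacts [⟨hctr_y, hctr_hy⟩, ⟨hctr_hy, hctr_y⟩]
  set F : Finset (U × V) := ({y | y ∈ L} : Finset (U ⊕ V)).image e
  have hmemF (p : U × V) : p ∈ F ↔ ∃ y ∈ L, e y = p := by
    simp [F]
  refine ⟨F, isStarCover_of_centre ctr ?_ ?_ ?_ ?_⟩
  · intro p hp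
    obtain ⟨y, -, rfl⟩ := (hmemF p).1 hp
    cases y <;> simp [e, hfE, hgE]
  · intro x
    by_cases hx : x ∈ L
    · exact ⟨e x, (hmemF _).2 ⟨x, hx, rfl⟩,
        (choiceEdge_ends f g x).imp (·.1.symm) (·.2.symm)⟩
    · obtain ⟨y, hy, rfl⟩ := not_not.1 (mt (hLc x).2 hx)
      exact ⟨e y, (hmemF _).2 ⟨y, hy, rfl⟩,
        (choiceEdge_ends f g y).symm.imp (·.1.symm) (·.2.symm)⟩
  · intro p hp
    obtain ⟨y, hy, rfl⟩ := (hmemF p).1 hp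
    refine ⟨(hctr_ends y hy).1.trans (hctr_ends y hy).2.symm, ?_⟩
    rw [(hctr_ends y hy).1]
    rcases choiceEdge_ends f g y with ⟨-, h₂⟩ | ⟨h₁, -⟩
    exacts [Or.inr h₂.symm, Or.inl h₁.symm]
  · intro z
    calc #{p ∈ F | ctr (Sum.inl p.1) = z}
        ≤ #(({y | h y = z} : Finset (U ⊕ V)).image e) := card_le_card fun p hp => by
          obtain ⟨hpF, hpz⟩ := mem_filter.1 hp
          obtain ⟨y, hy, rfl⟩ := (hmemF p).1 hpF
          exact mem_image.2
            ⟨y, mem_filter.2 ⟨mem_univ _, (hctr_ends y hy).1.symm.trans hpz⟩, rfl⟩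
      _ ≤ #({y | h y = z} : Finset (U ⊕ V)) := card_image_le
      _ ≤ k := card_choiceMap_fiber_le f g hf hg z

end Choice

theorem one_div_natCast_mul_le_natCast_iff {k : ℕ} (hk : 1 ≤ k) (a b : ℕ) :
    1 / (k : ℝ) * a ≤ b ↔ a ≤ k * b := by
  rw [one_div, inv_mul_le_iff₀ (by exact_mod_cast hk)]
  norm_cast

/-- **Theorem 10 (stars).** A bipartite graph `G = (U,V,E)` has a `k`-star covering
iff `|Γ(S)| ≥ (1/k)·|S|` for every `S ⊆ U` and every `S ⊆ V`. -/
theorem stmt_9 {U V : Type*} [Fintype U] [Fintype V] (k : ℕ) (hk : 1 ≤ k)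
    (E : Finset (U × V)) :
    (∃ F : Finset (U × V), IsStarCover k E F) ↔
      ((∀ S : Finset U, (1 / (k : ℝ)) * S.card ≤ ((nbhd E S).card : ℝ)) ∧
       (∀ S : Finset V, (1 / (k : ℝ)) * S.card ≤ ((nbhdR E S).card : ℝ))) := by
  simp only [one_div_natCast_mul_le_natCast_iff hk]
  refine ⟨fun ⟨F, hF⟩ => ⟨hF.card_le_mul_card_nbhd, hF.card_le_mul_card_nbhdR⟩,
    fun ⟨hU, hV⟩ => ?_⟩
  obtain ⟨f, hfE, hf⟩ := exists_card_fiber_le_of_hall (fun u => nbhd E {u}) k fun S =>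
    nbhd_eq_biUnion E S ▸ hU S
  obtain ⟨g, hgE, hg⟩ := exists_card_fiber_le_of_hall (fun v => nbhdR E {v}) k fun T =>
    nbhdR_eq_biUnion E T ▸ hV T
  exact exists_isStarCover_of_choice f g (fun u => mem_nbhd_singleton.1 (hfE u))
    (fun v => mem_nbhdR_singleton.1 (hgE v)) hf hg
end
end

section
/- Let k ≥ 1 be a positive integer and let G = (U,V,E) be a bipartite graph such that |Γ(S)| ≥ (1/k)·|S| for every S ⊆ U and every S ⊆ V. Then G has a k-star covering. -/
open scoped Classical

noncomputable section

variable {U V : Type*}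

open Finset Function Relation

/-!
By Hall's theorem for `k` copies of every vertex, the neighbourhood conditions give maps
`f : U → V` and `g : V → U` along edges of `E` whose fibres have at most `k` elements. On
`U ⊕ V` they combine to a map `h₀` whose cycles alternate between the sides, so have even
length. Sending every right vertex of a cycle back to its predecessor on the cycle instead
breaks each cycle into 2-cycles and enlarges no fibre. The functional graph of the resulting
map `h` is a forest of trees hanging from 2-cycles. Matching greedily from the leaves, let `P`
be the set of vertices joined to their parent: `h` maps `P` onto its complement, so the edges
`{x, h x}` with `x ∈ P` cover every vertex and form stars centred at the points `c ∉ P`, with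
at most `#(h⁻¹ c) ≤ k` edges each.
-/

theorem exists_fiber_card_le_of_forall_card_le {α β : Type*} [Fintype α] [Fintype β]
    [DecidableEq β] (r : α → β → Prop) [DecidableRel r] (k : ℕ)
    (hr : ∀ A : Finset α, #A ≤ k * #{b | ∃ a ∈ A, r a b}) :
    ∃ f : α → β, (∀ a, r a (f a)) ∧ ∀ b, #{a | f a = b} ≤ k := by
  -- Hall's theorem for `k` copies of every `b : β`.
  have hcopies : ∀ A : Finset α, #A ≤ #{q : β × Fin k | ∃ a ∈ A, r a q.1} := by
    intro A
    have hprod : ({q : β × Fin k | ∃ a ∈ A, r a q.1} : Finset _) =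
        ({b | ∃ a ∈ A, r a b} : Finset β) ×ˢ univ := by
      ext; simp
    rw [hprod, card_product, card_univ, Fintype.card_fin, mul_comm]
    exact hr A
  obtain ⟨F, hFinj, hF⟩ := (Fintype.all_card_le_filter_rel_iff_exists_injective _).1 hcopies
  refine ⟨fun a => (F a).1, hF, fun b => ?_⟩
  calc #{a | (F a).1 = b} ≤ #(univ : Finset (Fin k)) :=
        card_le_card_of_injOn (fun a => (F a).2) (fun _ _ => mem_coe.2 (mem_univ _))
          fun _ _ _ _ he => hFinj (Prod.ext (by simp_all) he)
    _ = k := by simp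

section Neighbourhoods

variable (E : Finset (U × V))

theorem filter_exists_mem_eq_nbhd [Fintype V] (S : Finset U) :
    ({v | ∃ u ∈ S, (u, v) ∈ E} : Finset V) = nbhd E S := by
  ext v
  simp only [nbhd, mem_filter, mem_univ, true_and, mem_image]
  exact ⟨fun ⟨u, hu, huv⟩ => ⟨(u, v), ⟨huv, hu⟩, rfl⟩,
    fun ⟨p, ⟨hp, hpS⟩, hpv⟩ => ⟨p.1, hpS, hpv ▸ hp⟩⟩

theorem filter_exists_mem_eq_nbhdR [Fintype U] (T : Finset V) :
    ({u | ∃ v ∈ T, (u, v) ∈ E} : Finset U) = nbhdR E T := by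
  ext u
  simp only [nbhdR, mem_filter, mem_univ, true_and, mem_image]
  exact ⟨fun ⟨v, hv, huv⟩ => ⟨(u, v), ⟨huv, hv⟩, rfl⟩,
    fun ⟨p, ⟨hp, hpT⟩, hpu⟩ => ⟨p.2, hpT, hpu ▸ hp⟩⟩

end Neighbourhoods

section FunctionalForest

variable {X : Type*} (h : X → X) (root : X → Prop)

def IsChild (y x : X) : Prop := h y = x ∧ ¬ root y

theorem exists_iterate_of_transGen_isChild {x y : X} (hyx : TransGen (IsChild h root) y x) :
    ∃ n, 0 < n ∧ h^[n] y = x := by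
  induction hyx with
  | single hb => exact ⟨1, one_pos, hb.1⟩
  | tail _ hbc ih =>
    obtain ⟨n, -, rfl⟩ := ih
    exact ⟨n + 1, n.succ_pos, by rw [iterate_succ_apply', hbc.1]⟩

theorem wellFounded_isChild [Finite X] (hcycle : ∀ x ∈ periodicPts h, root x ∨ root (h x)) :
    WellFounded (IsChild h root) := by
  have : Std.Irrefl (TransGen (IsChild h root)) := ⟨fun x hx => by
    obtain ⟨n, hn, hxn⟩ := exists_iterate_of_transGen_isChild h root hx
    obtain ⟨_, ⟨rfl, hxr⟩, hrest⟩ := TransGen.head'_iff.1 hx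
    -- the chain leaves `x` for the root `h x`, from which it cannot continue
    have hhx : root (h x) := (hcycle x (mk_mem_periodicPts hn hxn)).resolve_left hxr
    rcases hrest.cases_head with heq | ⟨_, ⟨-, hnot⟩, -⟩
    · exact hxr (heq ▸ hhx)
    · exact hnot hhx⟩
  exact Subrelation.wf TransGen.single (Finite.wellFounded_of_trans_of_irrefl _)

theorem exists_forall_mem_iff_isChild_notMem (hwf : WellFounded (IsChild h root)) :
    ∃ P : Set X, ∀ x, x ∈ P ↔ ∀ y, IsChild h root y x → y ∉ P :=
  ⟨{x | hwf.fix (fun x ih => ∀ y (hy : IsChild h root y x), ¬ ih y hy) x},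
    fun x => iff_of_eq (hwf.fix_eq _ x)⟩

theorem exists_mapsTo_surjOn_compl [Finite X]
    (htwo : ∀ x ∈ periodicPts h, h (h x) = x ∧ h x ≠ x) :
    ∃ P : Set X, Set.MapsTo h P Pᶜ ∧ Set.SurjOn h P Pᶜ := by
  let _ := IsWellOrder.linearOrder (WellOrderingRel (α := X))
  let root : X → Prop := fun x => x ∈ periodicPts h ∧ x < h x
  have hroot : ∀ x, root x → h (h x) = x ∧ ¬ root (h x) := by
    rintro x ⟨hx, hlt⟩
    refine ⟨(htwo x hx).1, fun ⟨_, hlt'⟩ => ?_⟩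
    rw [(htwo x hx).1] at hlt'
    exact lt_asymm hlt hlt'
  have hcycle : ∀ x ∈ periodicPts h, root x ∨ root (h x) := by
    intro x hx
    rcases lt_or_gt_of_ne (htwo x hx).2.symm with hlt | hlt
    · exact Or.inl ⟨hx, hlt⟩
    · exact Or.inr ⟨(bijOn_periodicPts h).mapsTo hx, by rwa [(htwo x hx).1]⟩
  obtain ⟨P, hP⟩ :=
    exists_forall_mem_iff_isChild_notMem h root (wellFounded_isChild h root hcycle)
  refine ⟨P, fun x hx hhx => ?_, fun x hx => ?_⟩
  · by_cases hr : root x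
    · exact (hP x).1 hx (h x) ⟨(hroot x hr).1, (hroot x hr).2⟩ hhx
    · exact (hP (h x)).1 hhx x ⟨rfl, hr⟩ hx
  · have : ¬ ∀ y, IsChild h root y x → y ∉ P := (hP x).not.1 hx
    push Not at this
    obtain ⟨y, hy, hyP⟩ := this
    exact ⟨y, hyP, hy.1⟩

end FunctionalForest

section FoldCycles

variable {X : Type*} (h : X → X)

def cyclePred (x : X) : X := h^[minimalPeriod h x - 1] x

variable {h}

theorem apply_cyclePred {x : X} (hx : x ∈ periodicPts h) : h (cyclePred h x) = x := by
  rw [cyclePred, ← iterate_succ_apply' h, Nat.succ_eq_add_one,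
    Nat.sub_add_cancel (minimalPeriod_pos_of_mem_periodicPts hx), iterate_minimalPeriod]

theorem cyclePred_mem {x : X} (hx : x ∈ periodicPts h) : cyclePred h x ∈ periodicPts h :=
  (bijOn_periodicPts h).mapsTo.iterate _ hx

theorem cyclePred_apply {x : X} (hx : x ∈ periodicPts h) : cyclePred h (h x) = x :=
  have hhx := (bijOn_periodicPts h).mapsTo hx
  (bijOn_periodicPts h).injOn (cyclePred_mem hhx) hx (apply_cyclePred hhx)

variable (h) (R : Set X)

def foldCycles (x : X) : X := if x ∈ periodicPts h ∧ x ∈ R then cyclePred h x else h x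

variable {h R}

theorem foldCycles_eq_or (x : X) : foldCycles h R x = h x ∨ h (foldCycles h R x) = x := by
  unfold foldCycles
  split_ifs with hx
  · exact Or.inr (apply_cyclePred hx.1)
  · exact Or.inl rfl

theorem adj_foldCycles {G : SimpleGraph X} (hadj : ∀ x, G.Adj x (h x)) (x : X) :
    G.Adj x (foldCycles h R x) := by
  rcases foldCycles_eq_or (R := R) x with hx | hx
  · exact hx ▸ hadj x
  · exact (hx ▸ hadj (foldCycles h R x)).symm

theorem cyclePred_mem_iff (hR : ∀ x, h x ∈ R ↔ x ∉ R) {x : X} (hx : x ∈ periodicPts h) :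
    cyclePred h x ∈ R ↔ x ∉ R := by
  have := hR (cyclePred h x)
  rw [apply_cyclePred hx] at this
  tauto

theorem foldCycles_mem_iff (hR : ∀ x, h x ∈ R ↔ x ∉ R) (x : X) :
    foldCycles h R x ∈ R ↔ x ∉ R := by
  unfold foldCycles
  split_ifs with hx
  · exact cyclePred_mem_iff hR hx.1
  · exact hR x

theorem foldCycles_mem_periodicPts {x : X} (hx : x ∈ periodicPts h) :
    foldCycles h R x ∈ periodicPts h := by
  unfold foldCycles
  split_ifs
  · exact cyclePred_mem hx
  · exact (bijOn_periodicPts h).mapsTo hx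

theorem foldCycles_of_notMem {x : X} (hx : x ∉ periodicPts h) : foldCycles h R x = h x :=
  if_neg fun h' => hx h'.1

theorem mem_periodicPts_of_mem_periodicPts_foldCycles {x : X}
    (hx : x ∈ periodicPts (foldCycles h R)) : x ∈ periodicPts h := by
  by_contra hxC
  obtain ⟨n, hn, hxn⟩ := mem_periodicPts.1 hx
  -- an orbit of `foldCycles h R` that has entered `periodicPts h` cannot leave it
  have hagree : ∀ m, (foldCycles h R)^[m] x ∉ periodicPts h →
      (foldCycles h R)^[m] x = h^[m] x := by
    intro m
    induction m with
    | zero => simp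
    | succ m ih =>
      intro hm
      rw [iterate_succ_apply'] at hm ⊢
      have hm' : (foldCycles h R)^[m] x ∉ periodicPts h :=
        fun h' => hm (foldCycles_mem_periodicPts h')
      rw [foldCycles_of_notMem hm', ih hm', iterate_succ_apply']
  have hxn' : (foldCycles h R)^[n] x = x := hxn
  exact hxC (mk_mem_periodicPts hn ((hagree n (hxn'.symm ▸ hxC)).symm.trans hxn'))

theorem foldCycles_foldCycles (hR : ∀ x, h x ∈ R ↔ x ∉ R) {x : X}
    (hx : x ∈ periodicPts h) :
    foldCycles h R (foldCycles h R x) = x := by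
  by_cases hxR : x ∈ R
  · have hfx : foldCycles h R x = cyclePred h x := if_pos ⟨hx, hxR⟩
    have hffx : foldCycles h R (cyclePred h x) = h (cyclePred h x) :=
      if_neg fun h' => (cyclePred_mem_iff hR hx).1 h'.2 hxR
    rw [hfx, hffx, apply_cyclePred hx]
  · have hfx : foldCycles h R x = h x := if_neg fun h' => hxR h'.2
    have hffx : foldCycles h R (h x) = cyclePred h (h x) :=
      if_pos ⟨(bijOn_periodicPts h).mapsTo hx, (hR x).2 hxR⟩
    rw [hfx, hffx, cyclePred_apply hx]

theorem foldCycles_ne (hR : ∀ x, h x ∈ R ↔ x ∉ R) (x : X) : foldCycles h R x ≠ x := by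
  intro he
  have := foldCycles_mem_iff hR x
  rw [he] at this
  tauto

theorem card_filter_foldCycles_le [Fintype X] [DecidableEq X] (hR : ∀ x, h x ∈ R ↔ x ∉ R)
    (x : X) :
    #{y | foldCycles h R y = x} ≤ #{y | h y = x} := by
  by_cases hx : x ∈ periodicPts h ∧ x ∉ R
  · -- the fibre of `x` gains `h x` and loses `cyclePred h x`
    have hpred : cyclePred h x ∈ ({y | h y = x} : Finset X) := by
      simp [apply_cyclePred hx.1]
    calc #{y | foldCycles h R y = x}
        ≤ #(insert (h x) (({y | h y = x} : Finset X).erase (cyclePred h x))) := by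
          refine card_le_card fun y hy => ?_
          simp only [mem_filter, mem_univ, true_and, mem_insert, mem_erase] at hy ⊢
          unfold foldCycles at hy
          split_ifs at hy with hyC
          · exact Or.inl (by rw [← hy, apply_cyclePred hyC.1])
          · refine Or.inr ⟨?_, hy⟩
            rintro rfl
            exact hyC ⟨cyclePred_mem hx.1, (cyclePred_mem_iff hR hx.1).2 hx.2⟩
      _ ≤ #(({y | h y = x} : Finset X).erase (cyclePred h x)) + 1 := card_insert_le _ _
      _ = #{y | h y = x} := card_erase_add_one hpred
  · refine card_le_card fun y hy => ?_
    simp only [mem_filter, mem_univ, true_and] at hy ⊢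
    unfold foldCycles at hy
    split_ifs at hy with hyC
    · exact absurd ⟨hy ▸ cyclePred_mem hyC.1,
        hy ▸ (cyclePred_mem_iff hR hyC.1).not.2 (not_not.2 hyC.2)⟩ hx
    · exact hy

end FoldCycles

section StarCover

theorem mkGraph_adj {F : Finset (U × V)} {x y : U ⊕ V} :
    (mkGraph F).Adj x y ↔ ∃ p ∈ F, s(x, y) = s(Sum.inl p.1, Sum.inr p.2) := by
  simp only [mkGraph, SimpleGraph.fromRel_adj, Sym2.eq_iff]
  aesop

theorem sym2_inl_inr_injective :
    Injective fun p : U × V => s((Sum.inl p.1 : U ⊕ V), Sum.inr p.2) := by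
  intro p q hpq
  simp_all [Prod.ext_iff]

theorem exists_mem_of_mkGraph_adj {F : Finset (U × V)} {x y : U ⊕ V}
    (hxy : (mkGraph F).Adj x y) :
    ∃ p ∈ F, x = Sum.inl p.1 ∨ x = Sum.inr p.2 := by
  obtain ⟨p, hp, hxy⟩ := mkGraph_adj.1 hxy
  exact ⟨p, hp, Sym2.mem_iff.1 (hxy ▸ Sym2.mem_mk_left x y)⟩

def starCenter (h : U ⊕ V → U ⊕ V) (P : Set (U ⊕ V)) (x : U ⊕ V) : U ⊕ V :=
  if x ∈ P then h x else x

variable [Fintype U] [Fintype V]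

def starEdges (h : U ⊕ V → U ⊕ V) (P : Set (U ⊕ V)) : Finset (U × V) :=
  {p | ∃ x ∈ P, s(x, h x) = s(Sum.inl p.1, Sum.inr p.2)}

variable {E : Finset (U × V)} {h : U ⊕ V → U ⊕ V} {P : Set (U ⊕ V)}

theorem starEdges_subset (hadj : ∀ x, (mkGraph E).Adj x (h x)) : starEdges h P ⊆ E := by
  intro p hp
  obtain ⟨x, -, hxp⟩ := (mem_filter.1 hp).2
  obtain ⟨q, hq, hxq⟩ := mkGraph_adj.1 (hadj x)
  rwa [sym2_inl_inr_injective (hxp.symm.trans hxq)]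

theorem mkGraph_starEdges_adj (hadj : ∀ x, (mkGraph E).Adj x (h x)) {a b : U ⊕ V} :
    (mkGraph (starEdges h P)).Adj a b ↔ ∃ x ∈ P, s(a, b) = s(x, h x) := by
  rw [mkGraph_adj]
  constructor
  · rintro ⟨p, hp, hab⟩
    obtain ⟨x, hx, hxp⟩ := (mem_filter.1 hp).2
    exact ⟨x, hx, hab.trans hxp.symm⟩
  · rintro ⟨x, hx, hab⟩
    obtain ⟨q, -, hxq⟩ := mkGraph_adj.1 (hadj x)
    exact ⟨q, mem_filter.2 ⟨mem_univ _, x, hx, hxq⟩, hab.trans hxq⟩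

theorem starCenter_eq_of_adj (hadj : ∀ x, (mkGraph E).Adj x (h x)) (hmaps : Set.MapsTo h P Pᶜ)
    {a b : U ⊕ V} (hab : (mkGraph (starEdges h P)).Adj a b) :
    starCenter h P a = starCenter h P b := by
  obtain ⟨x, hx, hab⟩ := (mkGraph_starEdges_adj hadj).1 hab
  have hcenter : ∀ z ∈ s(x, h x), starCenter h P z = h x := by
    intro z hz
    rcases Sym2.mem_iff.1 hz with rfl | rfl
    · exact if_pos hx
    · exact if_neg (hmaps hx)
  rw [hcenter a (hab ▸ Sym2.mem_mk_left a b), hcenter b (hab ▸ Sym2.mem_mk_right a b)]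

theorem starCenter_eq_of_reachable (hadj : ∀ x, (mkGraph E).Adj x (h x))
    (hmaps : Set.MapsTo h P Pᶜ) {a b : U ⊕ V} (hab : (mkGraph (starEdges h P)).Reachable a b) :
    starCenter h P a = starCenter h P b := by
  obtain ⟨w⟩ := hab
  induction w with
  | nil => rfl
  | cons hadj' _ ih => exact (starCenter_eq_of_adj hadj hmaps hadj').trans ih

theorem exists_center_of_mem_starEdges (hmaps : Set.MapsTo h P Pᶜ) {p : U × V}
    (hp : p ∈ starEdges h P) :
    ∃ x ∈ P, s(x, h x) = s(Sum.inl p.1, Sum.inr p.2) ∧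
      starCenter h P (Sum.inl p.1) = h x := by
  obtain ⟨x, hx, hxp⟩ := (mem_filter.1 hp).2
  refine ⟨x, hx, hxp, ?_⟩
  rcases Sym2.eq_iff.1 hxp with ⟨rfl, -⟩ | ⟨-, hhx⟩
  · exact if_pos hx
  · rw [← hhx]
    exact if_neg (hmaps hx)

theorem isStarCover_starEdges {k : ℕ} (hadj : ∀ x, (mkGraph E).Adj x (h x))
    (hfib : ∀ x, #{y | h y = x} ≤ k) (hmaps : Set.MapsTo h P Pᶜ)
    (hsurj : Set.SurjOn h P Pᶜ) :
    IsStarCover k E (starEdges h P) := by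
  refine ⟨starEdges_subset hadj, fun x => ?_, fun c => ?_⟩
  · obtain ⟨y, hxy⟩ : ∃ y, (mkGraph (starEdges h P)).Adj x y := by
      by_cases hx : x ∈ P
      · exact ⟨h x, (mkGraph_starEdges_adj hadj).2 ⟨x, hx, rfl⟩⟩
      · obtain ⟨y, hy, rfl⟩ := hsurj hx
        exact ⟨y, (mkGraph_starEdges_adj hadj).2 ⟨y, hy, Sym2.eq_swap⟩⟩
    exact exists_mem_of_mkGraph_adj hxy
  induction c using SimpleGraph.ConnectedComponent.ind with | h x₀ => ?_
  have hcenter : ∀ p ∈ componentEdges (starEdges h P) ((mkGraph _).connectedComponentMk x₀),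
      ∃ x ∈ P, s(x, h x) = s(Sum.inl p.1, Sum.inr p.2) ∧ h x = starCenter h P x₀ := by
    intro p hp
    obtain ⟨hpF, hpc⟩ := mem_filter.1 hp
    obtain ⟨x, hx, hxp, hcx⟩ := exists_center_of_mem_starEdges hmaps hpF
    exact ⟨x, hx, hxp,
      hcx ▸ starCenter_eq_of_reachable hadj hmaps (SimpleGraph.ConnectedComponent.eq.1 hpc)⟩
  refine ⟨?_, starCenter h P x₀, fun p hp => ?_⟩
  · calc _ ≤ #(({y | h y = starCenter h P x₀} : Finset _).image fun y => s(y, h y)) := by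
          refine card_le_card_of_injOn _ (fun p hp => ?_) sym2_inl_inr_injective.injOn
          obtain ⟨x, -, hxp, hcx⟩ := hcenter p hp
          exact mem_image.2 ⟨x, by simpa using hcx, hxp⟩
      _ ≤ #{y | h y = starCenter h P x₀} := card_image_le
      _ ≤ k := hfib _
  · obtain ⟨x, -, hxp, hcx⟩ := hcenter p hp
    rw [← hcx]
    rcases Sym2.mem_iff.1 (hxp ▸ Sym2.mem_mk_right x (h x)) with hx | hx
    · exact Or.inl hx.symm
    · exact Or.inr hx.symm

end StarCover

section SumElim

variable (f : U → V) (g : V → U)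

theorem mkGraph_adj_sumElim {E : Finset (U × V)} (hf : ∀ u, (u, f u) ∈ E)
    (hg : ∀ v, (g v, v) ∈ E) (x : U ⊕ V) :
    (mkGraph E).Adj x (Sum.elim (Sum.inr ∘ f) (Sum.inl ∘ g) x) := by
  rw [mkGraph_adj]
  cases x with
  | inl u => exact ⟨(u, f u), hf u, rfl⟩
  | inr v => exact ⟨(g v, v), hg v, Sym2.eq_swap⟩

theorem card_filter_sumElim_le [Fintype U] [Fintype V] {k : ℕ}
    (hf : ∀ v, #{u | f u = v} ≤ k) (hg : ∀ u, #{v | g v = u} ≤ k) (x : U ⊕ V) :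
    #{y | Sum.elim (Sum.inr ∘ f) (Sum.inl ∘ g) y = x} ≤ k := by
  cases x with
  | inl u =>
    have : ({y | Sum.elim (Sum.inr ∘ f) (Sum.inl ∘ g) y = Sum.inl u} : Finset (U ⊕ V)) =
        ({v | g v = u} : Finset V).map Embedding.inr := by
      ext (_ | _) <;> simp
    rw [this, card_map]
    exact hg u
  | inr v =>
    have : ({y | Sum.elim (Sum.inr ∘ f) (Sum.inl ∘ g) y = Sum.inr v} : Finset (U ⊕ V)) =
        ({u | f u = v} : Finset U).map Embedding.inl := by
      ext (_ | _) <;> simp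
    rw [this, card_map]
    exact hf v

end SumElim

/-- **Theorem 10, sufficiency.** If a bipartite graph `G = (U,V,E)` satisfies
`|Γ(S)| ≥ (1/k)·|S|` for every `S ⊆ U` and every `S ⊆ V`, then `G` has a `k`-star
covering. -/
theorem stmt_11 {U V : Type*} [Fintype U] [Fintype V] (k : ℕ) (hk : 1 ≤ k)
    (E : Finset (U × V))
    (hNL : ∀ S : Finset U, (1 / (k : ℝ)) * S.card ≤ ((nbhd E S).card : ℝ))
    (hNR : ∀ S : Finset V, (1 / (k : ℝ)) * S.card ≤ ((nbhdR E S).card : ℝ)) :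
    ∃ F : Finset (U × V), IsStarCover k E F := by
  have hk0 : (0 : ℝ) < k := by exact_mod_cast hk
  have hcast : ∀ a b : ℕ, 1 / (k : ℝ) * a ≤ b → a ≤ k * b := fun a b hab => by
    rw [one_div, inv_mul_le_iff₀ hk0] at hab
    exact_mod_cast hab
  obtain ⟨f, hfE, hf⟩ := exists_fiber_card_le_of_forall_card_le (fun u v => (u, v) ∈ E) k
    fun S => by rw [filter_exists_mem_eq_nbhd]; exact hcast _ _ (hNL S)
  obtain ⟨g, hgE, hg⟩ := exists_fiber_card_le_of_forall_card_le (fun v u => (u, v) ∈ E) k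
    fun T => by rw [filter_exists_mem_eq_nbhdR]; exact hcast _ _ (hNR T)
  set h₀ := Sum.elim (Sum.inr ∘ f) (Sum.inl ∘ g)
  have hR : ∀ x, h₀ x ∈ Set.range Sum.inr ↔ x ∉ Set.range Sum.inr := by
    rintro (u | v) <;> simp [h₀]
  set h := foldCycles h₀ (Set.range Sum.inr)
  obtain ⟨P, hmaps, hsurj⟩ := exists_mapsTo_surjOn_compl h fun x hx =>
    ⟨foldCycles_foldCycles hR (mem_periodicPts_of_mem_periodicPts_foldCycles hx),
      foldCycles_ne hR x⟩
  refine ⟨starEdges h P, isStarCover_starEdges ?_ ?_ hmaps hsurj⟩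
  · exact adj_foldCycles (mkGraph_adj_sumElim f g hfE hgE)
  · exact fun x => (card_filter_foldCycles_le hR x).trans (card_filter_sumElim_le f g hf hg x)
end
end

section
/- Let k ≥ 1 be a positive integer and let H = (A,B,E) be a finite bipartite graph with |Γ(S)| ≥ (1/k)·|S| for every S ⊆ A and with |B| = (1/k)·|A|. Then H has a k-star covering. -/
open scoped Classical

noncomputable section

variable {U V : Type*}

/-- If `H = (A,B,E)` is a bipartite graph with `|Γ(S)| ≥ (1/k)·|S|` for every
`S ⊆ A` and `|B| = (1/k)·|A|`, then `H` has a `k`-star covering. -/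
theorem stmt_15 {A B : Type*} [Fintype A] [Fintype B] (k : ℕ) (hk : 1 ≤ k)
    (E : Finset (A × B))
    (hN : ∀ S : Finset A, (1 / (k : ℝ)) * S.card ≤ ((nbhd E S).card : ℝ))
    (hcard : (Fintype.card B : ℝ) = (1 / (k : ℝ)) * Fintype.card A) :
    ∃ F : Finset (A × B), IsStarCover k E F := by
  classical
  have hk0 : (0 : ℝ) < k := by exact_mod_cast hk
  -- Hall's condition for the blown-up graph
  set t : A → Finset (B × Fin k) := fun a => (nbhd E {a}) ×ˢ Finset.univ with ht
  have hall : ∀ s : Finset A, s.card ≤ (s.biUnion t).card := by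
    intro s
    have h1 : s.biUnion t = (nbhd E s) ×ˢ (Finset.univ : Finset (Fin k)) := by
      ext ⟨b, i⟩
      simp only [Finset.mem_biUnion, ht, Finset.mem_product, Finset.mem_univ, and_true,
        nbhd, Finset.mem_image, Finset.mem_filter, Finset.mem_singleton]
      constructor
      · rintro ⟨a, has, p, ⟨hpE, hp1⟩, hp2⟩
        exact ⟨p, ⟨hpE, hp1 ▸ has⟩, hp2⟩
      · rintro ⟨p, ⟨hpE, hp1⟩, hp2⟩
        exact ⟨p.1, hp1, p, ⟨hpE, rfl⟩, hp2⟩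
    rw [h1, Finset.card_product, Finset.card_univ, Fintype.card_fin]
    have h2 := hN s
    have h3 : (s.card : ℝ) ≤ (nbhd E s).card * k := by
      rw [div_mul_eq_mul_div, one_mul, div_le_iff₀ hk0] at h2
      linarith
    exact_mod_cast h3
  obtain ⟨f, hfinj, hft⟩ := (Finset.all_card_le_biUnion_card_iff_exists_injective t).mp hall
  have hfE : ∀ a, (a, (f a).1) ∈ E := by
    intro a
    have := hft a
    simp only [ht, Finset.mem_product, Finset.mem_univ, and_true, nbhd, Finset.mem_image,
      Finset.mem_filter, Finset.mem_singleton] at this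
    obtain ⟨p, ⟨hpE, hp1⟩, hp2⟩ := this
    have : p = (a, (f a).1) := Prod.ext hp1 hp2
    rwa [this] at hpE
  set F : Finset (A × B) := Finset.univ.image (fun a => (a, (f a).1)) with hF
  have hmemF : ∀ p : A × B, p ∈ F ↔ p.2 = (f p.1).1 := by
    intro p
    simp only [hF, Finset.mem_image, Finset.mem_univ, true_and]
    constructor
    · rintro ⟨a, ha⟩
      have h1 : p.1 = a := by rw [← ha]
      have h2 : p.2 = (f a).1 := by rw [← ha]
      rw [h2, h1]
    · intro h
      exact ⟨p.1, by rw [← h]⟩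
  -- fibers
  have hfib_card : ∀ b : B, (Finset.univ.filter fun a => (f a).1 = b).card ≤ k := by
    intro b
    have : (Finset.univ.filter fun a => (f a).1 = b).card ≤
        (Finset.univ : Finset (Fin k)).card := by
      apply Finset.card_le_card_of_injOn (fun a => (f a).2)
      · intro a _; exact Finset.mem_univ _
      · intro a ha a' ha' hee
        simp only [Finset.mem_coe, Finset.mem_filter] at ha ha'
        apply hfinj
        exact Prod.ext (ha.2.trans ha'.2.symm) hee
    simpa using this
  have hAB : Fintype.card A = k * Fintype.card B := by
    have : (Fintype.card A : ℝ) = k * Fintype.card B := by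
      rw [hcard]; field_simp
    exact_mod_cast this
  have hfib_ne : ∀ b : B, ∃ a : A, (f a).1 = b := by
    by_contra h
    push_neg at h
    obtain ⟨b0, hb0⟩ := h
    have hsum : Fintype.card A =
        ∑ b : B, (Finset.univ.filter fun a => (f a).1 = b).card := by
      rw [← Finset.card_univ]
      exact Finset.card_eq_sum_card_fiberwise (fun a _ => Finset.mem_univ _)
    have hfb0 : (Finset.univ.filter fun a => (f a).1 = b0).card = 0 := by
      rw [Finset.card_eq_zero]
      ext a
      simp only [Finset.mem_filter, Finset.mem_univ, true_and, Finset.notMem_empty,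
        iff_false]
      exact hb0 a
    have hBpos : 0 < Fintype.card B := Fintype.card_pos_iff.mpr ⟨b0⟩
    have hle : ∑ b : B, (Finset.univ.filter fun a => (f a).1 = b).card ≤
        ∑ b ∈ Finset.univ.erase b0, k := by
      rw [← Finset.add_sum_erase _ _ (Finset.mem_univ b0), hfb0, zero_add]
      exact Finset.sum_le_sum fun b _ => hfib_card b
    rw [Finset.sum_const, smul_eq_mul, Finset.card_erase_of_mem (Finset.mem_univ b0),
      Finset.card_univ] at hle
    have h1 : (Fintype.card B - 1) * k = k * Fintype.card B - k := by
      rw [Nat.sub_one_mul, Nat.mul_comm]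
    have h2 : k ≤ k * Fintype.card B := Nat.le_mul_of_pos_right k hBpos
    have h3 : k * Fintype.card B ≤ (Fintype.card B - 1) * k := by
      rw [← hAB, hsum]; exact hle
    omega
  -- the component colouring
  have hgadj : ∀ x y : A ⊕ B, (mkGraph F).Adj x y →
      Sum.elim (fun a => (f a).1) id x = Sum.elim (fun a => (f a).1) id y := by
    intro x y hxy
    obtain ⟨hne, h | h⟩ := hxy
    · obtain ⟨p, hpF, h1, h2⟩ := h
      subst h1; subst h2; simp; exact ((hmemF p).mp hpF).symm
    · obtain ⟨p, hpF, h1, h2⟩ := h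
      subst h1; subst h2; simp; exact (hmemF p).mp hpF
  have hgwalk : ∀ (x y : A ⊕ B), (mkGraph F).Walk x y →
      Sum.elim (fun a => (f a).1) id x = Sum.elim (fun a => (f a).1) id y := by
    intro x y w
    induction w with
    | nil => rfl
    | cons h w ih => exact (hgadj _ _ h).trans ih
  set G : (mkGraph F).ConnectedComponent → B :=
    SimpleGraph.ConnectedComponent.lift (Sum.elim (fun a => (f a).1) id)
      (fun x y w _ => hgwalk x y w) with hG
  refine ⟨F, ?_, ?_, ?_⟩
  · intro p hp
    rw [hmemF] at hp
    have := hfE p.1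
    rwa [← hp, Prod.mk.eta] at this
  · rintro (a | b)
    · exact ⟨(a, (f a).1), (hmemF _).mpr rfl, Or.inl rfl⟩
    · obtain ⟨a, ha⟩ := hfib_ne b
      exact ⟨(a, b), (hmemF _).mpr ha.symm, Or.inr rfl⟩
  · intro c
    have hsub : ∀ p ∈ componentEdges F c, p.2 = G c := by
      intro p hp
      simp only [componentEdges, Finset.mem_filter] at hp
      have h1 : G c = (f p.1).1 := by
        rw [← hp.2]
        rfl
      rw [h1]
      exact (hmemF p).mp hp.1
    constructor
    · calc (componentEdges F c).card
          ≤ (F.filter fun p => p.2 = G c).card := by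
            apply Finset.card_le_card
            intro p hp
            rw [Finset.mem_filter]
            exact ⟨Finset.mem_of_mem_filter p hp, hsub p hp⟩
        _ = ((Finset.univ.filter fun a => (f a).1 = G c).image fun a => (a, G c)).card := by
            congr 1
            ext p
            simp only [Finset.mem_filter, Finset.mem_image, Finset.mem_univ, true_and,
              hmemF]
            constructor
            · rintro ⟨h1, h2⟩
              exact ⟨p.1, by rw [← h2, h1], by rw [← h2, Prod.mk.eta]⟩
            · rintro ⟨a, ha1, ha2⟩
              have hp1 : p.1 = a := by rw [← ha2]
              have hp2 : p.2 = G c := by rw [← ha2]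
              rw [hp2, hp1, ha1]
              exact ⟨rfl, rfl⟩
        _ = (Finset.univ.filter fun a => (f a).1 = G c).card := by
            apply Finset.card_image_of_injective
            intro a a' h
            exact (Prod.mk.injEq _ _ _ _).mp h |>.1
        _ ≤ k := hfib_card _
    · exact ⟨Sum.inr (G c), fun p hp => Or.inr (by rw [hsub p hp])⟩
end
end
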